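/- arXiv:1410.1331 — 12 statements merged into one kernel-verified Lean document; each statement's English description precedes it below -/
import Mathlib

section
/- If R is a ring and I is an ideal of R with I ⊆ J(R) (the Jacobson radical), and the quotient ring R/I is J-Armendariz, then R is J-Armendariz. -/
open Polynomial

/-- A ring `R` is J-Armendariz if whenever `f * g = 0` in `R[X]`, every product of a
coefficient of `f` with a coefficient of `g` lies in the Jacobson radical of `R`. -/
def IsJArmendariz (R : Type*) [Ring R] : Prop :=
  ∀ f g : R[X], f * g = 0 →
    ∀ i j : ℕ, f.coeff i * g.coeff j ∈ Ideal.jacobson (⊥ : Ideal R)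

theorem Ideal.comap_jacobson_bot_le_of_surjective {R S : Type*} [Ring R] [Ring S]
    {f : R →+* S} (hf : Function.Surjective f) (hker : RingHom.ker f ≤ jacobson ⊥) :
    comap f (jacobson ⊥) ≤ jacobson ⊥ := by
  rw [comap_jacobson_of_surjective hf, ← RingHom.ker_eq_comap_bot]
  exact (jacobson_mono hker).trans_eq jacobson_idem

theorem IsJArmendariz.of_surjective {R S : Type*} [Ring R] [Ring S] {f : R →+* S}
    (hf : Function.Surjective f) (hker : RingHom.ker f ≤ Ideal.jacobson ⊥)
    (hS : IsJArmendariz S) : IsJArmendariz R := by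
  intro p q hpq i j
  have hmap : p.map f * q.map f = 0 := by rw [← Polynomial.map_mul, hpq, Polynomial.map_zero]
  have hcoeff := hS _ _ hmap i j
  rw [coeff_map, coeff_map, ← map_mul] at hcoeff
  exact Ideal.comap_jacobson_bot_le_of_surjective hf hker hcoeff

theorem quotient_jArmendariz_of_ideal_le_jacobson {R : Type*} [Ring R]
    (I : TwoSidedIdeal R)
    (hIJ : ∀ x ∈ I, x ∈ Ideal.jacobson (⊥ : Ideal R))
    (hquot : IsJArmendariz I.ringCon.Quotient) :
    IsJArmendariz R :=
  hquot.of_surjective I.ringCon.mk'_surjective fun x hx =>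
    hIJ x (I.ker_ringCon_mk' ▸ (TwoSidedIdeal.mem_ker _).2 (RingHom.mem_ker.1 hx))
end

section
/- Every local ring is J-Armendariz. -/
/-!
In a local ring the Jacobson radical is exactly the set of nonunits, so `R ⧸ J(R)` has no zero
divisors. Reducing `f * g = 0` modulo `J(R)` then kills `f` or `g` in `(R ⧸ J(R))[X]`, i.e. all
coefficients of one factor lie in the two-sided ideal `J(R)`.
-/

open Polynomial

namespace IsLocalRing

variable {R : Type*} [Ring R] [IsLocalRing R]

/-- If `a * b = 1` then `b * a` is idempotent, and the only idempotents of a local ring are `0`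
and `1`. -/
instance isDedekindFiniteMonoid : IsDedekindFiniteMonoid R where
  mul_eq_one_symm {a b} hab := by
    have hidem : IsIdempotentElem (b * a) := by
      rw [IsIdempotentElem, mul_assoc, ← mul_assoc a, hab, one_mul]
    rcases isUnit_or_isUnit_of_add_one (add_sub_cancel (b * a) 1) with h | h
    · exact (IsIdempotentElem.iff_eq_one_of_isUnit h).mp hidem
    · have hba : b * a = 0 := by
        simpa using (IsIdempotentElem.iff_eq_one_of_isUnit h).mp hidem.one_sub
      have ha : a = 0 := by
        rw [← one_mul a, ← hab, mul_assoc, hba, mul_zero]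
      simp [ha] at hab

theorem mem_jacobson_bot_iff_not_isUnit {x : R} :
    x ∈ Ideal.jacobson (⊥ : Ideal R) ↔ ¬IsUnit x := by
  refine ⟨fun hx hu => ?_, fun hx => Ideal.mem_jacobson_iff.mpr fun y => ?_⟩
  · exact Ideal.jacobson_eq_top_iff.not.mpr bot_ne_top (Ideal.eq_top_of_isUnit_mem _ hx hu)
  · have hyx : ¬IsUnit (-(y * x)) := by
      rw [IsUnit.neg_iff]
      exact fun h => hx (isUnit_of_mul_isUnit_right h)
    obtain ⟨u, hu⟩ :=
      (isUnit_or_isUnit_of_add_one (neg_add_cancel_left (y * x) 1)).resolve_left hyx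
    have hinv : (↑u⁻¹ : R) * (y * x + 1) = 1 := by rw [← hu, Units.inv_mul]
    refine ⟨↑u⁻¹, ?_⟩
    rw [Ideal.mem_bot, ← hinv]
    noncomm_ring

instance : NoZeroDivisors (R ⧸ Ideal.jacobson (⊥ : Ideal R)) where
  eq_zero_or_eq_zero_of_mul_eq_zero {a b} hab := by
    obtain ⟨a, rfl⟩ := Ideal.Quotient.mk_surjective a
    obtain ⟨b, rfl⟩ := Ideal.Quotient.mk_surjective b
    simp only [← map_mul, Ideal.Quotient.eq_zero_iff_mem, mem_jacobson_bot_iff_not_isUnit,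
      IsUnit.mul_iff] at hab ⊢
    tauto

end IsLocalRing

theorem IsJArmendariz.of_noZeroDivisors_quotient_jacobson {R : Type*} [Ring R]
    [NoZeroDivisors (R ⧸ Ideal.jacobson (⊥ : Ideal R))] : IsJArmendariz R := by
  intro f g hfg i j
  set J := Ideal.jacobson (⊥ : Ideal R)
  have coeff_mem {p : R[X]} (hp : p.map (Ideal.Quotient.mk J) = 0) (k : ℕ) : p.coeff k ∈ J := by
    rw [← Ideal.Quotient.eq_zero_iff_mem, ← coeff_map, hp, coeff_zero]
  have hmap : f.map (Ideal.Quotient.mk J) * g.map (Ideal.Quotient.mk J) = 0 := by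
    rw [← Polynomial.map_mul, hfg, Polynomial.map_zero]
  rcases mul_eq_zero.mp hmap with hf | hg
  · exact Ideal.mul_mem_right _ J (coeff_mem hf i)
  · exact Ideal.mul_mem_left J _ (coeff_mem hg j)

theorem isJArmendariz_of_isLocalRing (R : Type*) [Ring R] [IsLocalRing R] :
    IsJArmendariz R :=
  .of_noZeroDivisors_quotient_jacobson
end

section
/- A product of two rings R₁ × R₂ is J-Armendariz if and only if both R₁ and R₂ are J-Armendariz. -/
open Polynomial

/-!
Polynomials over `R × S` are pairs of polynomials, `(R × S)[X] ≃+* R[X] × S[X]`, and the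
Jacobson radical of `R × S` is `J(R) × J(S)`. A zero product in `(R × S)[X]` is thus a pair of
zero products, and a zero product `f * g = 0` in `R[X]` lifts to the zero product `(f, 0) * (g, 0)`.
-/

section

variable {R S : Type*} [Ring R] [Ring S]

theorem Ideal.mem_jacobson_bot_prod {x : R × S} :
    x ∈ jacobson (⊥ : Ideal (R × S)) ↔
      x.1 ∈ jacobson (⊥ : Ideal R) ∧ x.2 ∈ jacobson (⊥ : Ideal S) := by
  simp only [mem_jacobson_iff, mem_bot, Prod.forall, Prod.exists, Prod.ext_iff, Prod.fst_sub,
    Prod.snd_sub, Prod.fst_add, Prod.snd_add, Prod.fst_mul, Prod.snd_mul, Prod.fst_one,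
    Prod.snd_one, Prod.fst_zero, Prod.snd_zero, exists_and_left, exists_and_right]
  exact ⟨fun h => ⟨fun a => (h a 0).1, fun b => (h 0 b).2⟩, fun h a b => ⟨h.1 a, h.2 b⟩⟩

variable (R S) in
noncomputable def Polynomial.prodRingEquiv : (R × S)[X] ≃+* R[X] × S[X] :=
  .ofBijective ((mapRingHom (RingHom.fst R S)).prod (mapRingHom (RingHom.snd R S)))
    ⟨fun F G h => by
      ext n : 1
      simpa [Prod.ext_iff, coeff_map] using congrArg (fun p => (p.1.coeff n, p.2.coeff n)) h,
     fun ⟨p, q⟩ => by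
      obtain ⟨P, rfl⟩ := map_surjective (RingHom.fst R S) Prod.fst_surjective p
      obtain ⟨Q, rfl⟩ := map_surjective (RingHom.snd R S) Prod.snd_surjective q
      exact ⟨C (1, 0) * P + C (0, 1) * Q, by simp⟩⟩

@[simp]
theorem Polynomial.prodRingEquiv_apply (F : (R × S)[X]) :
    prodRingEquiv R S F = (F.map (RingHom.fst R S), F.map (RingHom.snd R S)) :=
  rfl

@[simp]
theorem Polynomial.coeff_prodRingEquiv_symm (p : R[X]) (q : S[X]) (n : ℕ) :
    ((prodRingEquiv R S).symm (p, q)).coeff n = (p.coeff n, q.coeff n) := by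
  obtain ⟨F, hF⟩ := (prodRingEquiv R S).surjective (p, q)
  rw [← hF, RingEquiv.symm_apply_apply]
  obtain ⟨rfl, rfl⟩ := Prod.mk.inj hF
  simp [coeff_map]

end

theorem prod_isJArmendariz_iff (R₁ R₂ : Type*) [Ring R₁] [Ring R₂] :
    IsJArmendariz (R₁ × R₂) ↔ IsJArmendariz R₁ ∧ IsJArmendariz R₂ := by
  let e := prodRingEquiv R₁ R₂
  constructor
  · intro H
    refine ⟨fun f g hfg i j => ?_, fun f g hfg i j => ?_⟩
    · have hlift : e.symm (f, 0) * e.symm (g, 0) = 0 := by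
        rw [← map_mul, Prod.mk_mul_mk, hfg, mul_zero, Prod.mk_zero_zero, map_zero]
      simpa [e] using (Ideal.mem_jacobson_bot_prod.1 (H _ _ hlift i j)).1
    · have hlift : e.symm (0, f) * e.symm (0, g) = 0 := by
        rw [← map_mul, Prod.mk_mul_mk, hfg, mul_zero, Prod.mk_zero_zero, map_zero]
      simpa [e] using (Ideal.mem_jacobson_bot_prod.1 (H _ _ hlift i j)).2
  · rintro ⟨H₁, H₂⟩ F G hFG i j
    have hpair : e F * e G = 0 := by rw [← map_mul, hFG, map_zero]
    refine Ideal.mem_jacobson_bot_prod.2 ⟨?_, ?_⟩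
    · simpa [e, coeff_map] using H₁ _ _ (congrArg Prod.fst hpair) i j
    · simpa [e, coeff_map] using H₂ _ _ (congrArg Prod.snd hpair) i j
end

section
/- An arbitrary direct product of rings ∏_{t ∈ I} R_t is J-Armendariz if and only if each ring R_t is J-Armendariz. -/
open Polynomial

section Pi

variable {ι : Type*} {R : ι → Type*} [∀ t, Ring (R t)]

theorem Pi.mem_jacobson_bot_iff {x : ∀ t, R t} :
    x ∈ Ideal.jacobson (⊥ : Ideal (∀ t, R t)) ↔ ∀ t, x t ∈ Ideal.jacobson (⊥ : Ideal (R t)) := by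
  classical
  simp only [Ideal.mem_jacobson_iff, Ideal.mem_bot]
  constructor
  · intro hx t y
    obtain ⟨z, hz⟩ := hx (Pi.single t y)
    exact ⟨z t, by simpa using congrFun hz t⟩
  · intro hx y
    choose z hz using fun t ↦ hx t (y t)
    exact ⟨z, funext fun t ↦ by simpa using hz t⟩

theorem Polynomial.eq_zero_iff_forall_map_evalRingHom {F : (∀ t, R t)[X]} :
    F = 0 ↔ ∀ t, F.map (Pi.evalRingHom R t) = 0 := by
  simp only [Polynomial.ext_iff, coeff_map, coeff_zero, funext_iff, Pi.evalRingHom_apply,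
    Pi.zero_apply]
  exact forall_comm

theorem Polynomial.exists_map_evalRingHom_eq_single [DecidableEq ι] (t : ι) (f : (R t)[X]) :
    ∃ F : (∀ s, R s)[X], F.map (Pi.evalRingHom R t) = f ∧
      ∀ s ≠ t, F.map (Pi.evalRingHom R s) = 0 := by
  obtain ⟨F, rfl⟩ := map_surjective (Pi.evalRingHom R t)
    (fun a ↦ ⟨Pi.single t a, Pi.single_eq_same t a⟩) f
  -- cutting `F` down by the central idempotent `Pi.single t 1` kills every other component
  refine ⟨C (Pi.single t 1) * F, by simp, fun s hs ↦ ?_⟩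
  simp [Pi.single_eq_of_ne hs]

end Pi

theorem pi_isJArmendariz_iff {ι : Type*} (R : ι → Type*) [∀ t, Ring (R t)] :
    IsJArmendariz (∀ t, R t) ↔ ∀ t, IsJArmendariz (R t) := by
  classical
  constructor
  · intro h t f g hfg i j
    obtain ⟨F, hFt, hF⟩ := exists_map_evalRingHom_eq_single t f
    obtain ⟨G, hGt, -⟩ := exists_map_evalRingHom_eq_single t g
    have hFG : F * G = 0 := by
      refine eq_zero_iff_forall_map_evalRingHom.mpr fun s ↦ ?_
      rw [Polynomial.map_mul]
      by_cases hs : s = t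
      · subst hs; rw [hFt, hGt, hfg]
      · rw [hF s hs, zero_mul]
    simpa [← hFt, ← hGt] using Pi.mem_jacobson_bot_iff.mp (h F G hFG i j) t
  · intro h F G hFG i j
    refine Pi.mem_jacobson_bot_iff.mpr fun t ↦ ?_
    have hFGt := eq_zero_iff_forall_map_evalRingHom.mp hFG t
    rw [Polynomial.map_mul] at hFGt
    simpa using h t _ _ hFGt i j
end

section
/- Let R and S be rings, M an (R,S)-bimodule, and T the triangular matrix ring of matrices (r, m; 0, s) with r ∈ R, m ∈ M, s ∈ S. Then T is J-Armendariz if and only if both R and S are J-Armendariz. -/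
/-!
The projection `T → R × S`, `(r, m, s) ↦ (r, s)`, is split by the ring hom
`(r, s) ↦ (r, 0, s)`, and its kernel `[[0, M], [0, 0]]` squares to zero, so it lies in `J(T)`.
The J-Armendariz property descends to retracts (along a multiplicative, possibly non-unital,
section) and lifts along surjections whose kernel lies in the Jacobson radical; hence `T` is
J-Armendariz iff `R × S` is. Finally `J(R × S) = J(R) × J(S)`, and `R`, `S` are retracts of
`R × S` via `r ↦ (r, 0)` and `s ↦ (0, s)`.
-/

open Polynomial

/-- The formal triangular matrix ring `[[R, M], [0, S]]` built from rings `R`, `S` and an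
`(R,S)`-bimodule `M` (a left `R`-module and a right `S`-module, with commuting actions). -/
@[ext]
structure Tri (R M S : Type*) where
  r : R
  m : M
  s : S

set_option linter.unusedSectionVars false

namespace Tri

variable {R M S : Type*} [Ring R] [Ring S] [AddCommGroup M]
  [Module R M] [Module Sᵐᵒᵖ M] [SMulCommClass R Sᵐᵒᵖ M]

instance : Add (Tri R M S) := ⟨fun a b => ⟨a.r + b.r, a.m + b.m, a.s + b.s⟩⟩
instance : Zero (Tri R M S) := ⟨⟨0, 0, 0⟩⟩
instance : Neg (Tri R M S) := ⟨fun a => ⟨-a.r, -a.m, -a.s⟩⟩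
instance : One (Tri R M S) := ⟨⟨1, 0, 1⟩⟩
instance : Mul (Tri R M S) :=
  ⟨fun a b => ⟨a.r * b.r, a.r • b.m + MulOpposite.op b.s • a.m, a.s * b.s⟩⟩

@[simp] theorem add_def (a b : Tri R M S) :
    a + b = ⟨a.r + b.r, a.m + b.m, a.s + b.s⟩ := rfl
@[simp] theorem mul_def (a b : Tri R M S) :
    a * b = ⟨a.r * b.r, a.r • b.m + MulOpposite.op b.s • a.m, a.s * b.s⟩ := rfl
@[simp] theorem zero_def : (0 : Tri R M S) = ⟨0, 0, 0⟩ := rfl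
@[simp] theorem one_def : (1 : Tri R M S) = ⟨1, 0, 1⟩ := rfl
@[simp] theorem neg_def (a : Tri R M S) : -a = ⟨-a.r, -a.m, -a.s⟩ := rfl

instance : Ring (Tri R M S) where
  add_assoc a b c := by ext <;> simp [add_assoc]
  zero_add a := by ext <;> simp
  add_zero a := by ext <;> simp
  add_comm a b := by ext <;> simp [add_comm]
  neg_add_cancel a := by ext <;> simp
  mul_assoc a b c := by
    ext <;> simp [mul_assoc, mul_smul, smul_add, smul_comm, add_assoc]
  one_mul a := by ext <;> simp
  mul_one a := by ext <;> simp
  left_distrib a b c := by ext <;> simp [mul_add, smul_add, add_smul, add_add_add_comm]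
  right_distrib a b c := by ext <;> simp [add_mul, add_smul, add_add_add_comm]
  zero_mul a := by ext <;> simp
  mul_zero a := by ext <;> simp
  nsmul := nsmulRec
  zsmul := zsmulRec

end Tri

namespace Polynomial

variable {R A : Type*} [Semiring R] [Semiring A]

/-- `Polynomial.map` needs a unital hom; this also serves embeddings like `r ↦ (r, 0)`. -/
noncomputable def mapNonUnitalRingHom (φ : R →ₙ+* A) : R[X] →ₙ+* A[X] where
  toFun f := ⟨AddMonoidAlgebra.map (φ : R →+ A) f.toFinsupp⟩
  map_zero' := by ext; simp
  map_add' f g := by ext; simp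
  map_mul' f g := by
    ext k
    change φ ((f * g).coeff k) = _
    simp only [coeff_mul, map_sum, map_mul]
    rfl

@[simp] theorem coeff_mapNonUnitalRingHom (φ : R →ₙ+* A) (f : R[X]) (n : ℕ) :
    (mapNonUnitalRingHom φ f).coeff n = φ (f.coeff n) :=
  rfl

end Polynomial

namespace Ideal

variable {A B : Type*} [Ring A] [Ring B]

theorem mem_jacobson_bot_of_isNilpotent_mul {x : A} (h : ∀ y, IsNilpotent (y * x)) :
    x ∈ jacobson (⊥ : Ideal A) := by
  refine mem_jacobson_iff.mpr fun y => ⟨↑(h y).isUnit_add_one.unit⁻¹, ?_⟩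
  rw [mem_bot, mul_assoc, ← mul_add_one, sub_eq_zero]
  exact (h y).isUnit_add_one.unit.inv_mul

theorem map_mem_jacobson_bot_of_surjective {f : A →+* B} (hf : Function.Surjective f) {x : A}
    (hx : x ∈ jacobson (⊥ : Ideal A)) : f x ∈ jacobson (⊥ : Ideal B) := by
  have : RingHomSurjective f := ⟨hf⟩
  rw [jacobson_bot] at hx ⊢
  exact Ring.le_comap_jacobson f hx

theorem map_mem_jacobson_bot_iff {f : A →+* B} (hf : Function.Surjective f)
    (hker : RingHom.ker f ≤ jacobson (⊥ : Ideal A)) {x : A} :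
    f x ∈ jacobson (⊥ : Ideal B) ↔ x ∈ jacobson (⊥ : Ideal A) := by
  have : RingHomSurjective f := ⟨hf⟩
  rw [jacobson_bot] at hker
  rw [jacobson_bot, jacobson_bot]
  exact SetLike.ext_iff.mp (Module.comap_jacobson_of_ker_le (f := f.toSemilinearMap) hf hker) x

theorem mem_jacobson_bot_prod_s7 {x : A × B} :
    x ∈ jacobson (⊥ : Ideal (A × B)) ↔
      x.1 ∈ jacobson (⊥ : Ideal A) ∧ x.2 ∈ jacobson (⊥ : Ideal B) := by
  refine ⟨fun hx => ⟨?_, ?_⟩, fun ⟨h₁, h₂⟩ => mem_jacobson_iff.mpr fun y => ?_⟩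
  · exact map_mem_jacobson_bot_of_surjective (f := RingHom.fst A B) (fun a => ⟨(a, 0), rfl⟩) hx
  · exact map_mem_jacobson_bot_of_surjective (f := RingHom.snd A B) (fun b => ⟨(0, b), rfl⟩) hx
  obtain ⟨z₁, hz₁⟩ := mem_jacobson_iff.mp h₁ y.1
  obtain ⟨z₂, hz₂⟩ := mem_jacobson_iff.mp h₂ y.2
  rw [mem_bot] at hz₁ hz₂
  exact ⟨(z₁, z₂), mem_bot.mpr (Prod.ext hz₁ hz₂)⟩

end Ideal

namespace IsJArmendariz

variable {A B : Type*} [Ring A] [Ring B]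

theorem map_coeff_mul_coeff_mem (hB : IsJArmendariz B) (f : A →+* B) {F G : A[X]}
    (hFG : F * G = 0) (i j : ℕ) :
    f (F.coeff i * G.coeff j) ∈ Ideal.jacobson (⊥ : Ideal B) := by
  rw [map_mul, ← coeff_map, ← coeff_map]
  exact hB _ _ (by rw [← Polynomial.map_mul, hFG, Polynomial.map_zero]) i j

theorem of_surjective_of_ker_le (hB : IsJArmendariz B) (π : A →+* B)
    (hπ : Function.Surjective π)
    (hker : RingHom.ker π ≤ Ideal.jacobson (⊥ : Ideal A)) : IsJArmendariz A :=
  fun _ _ hFG i j =>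
    (Ideal.map_mem_jacobson_bot_iff hπ hker).mp (hB.map_coeff_mul_coeff_mem π hFG i j)

theorem of_leftInverse (hA : IsJArmendariz A) (σ : B →ₙ+* A) (π : A →+* B)
    (hπσ : Function.LeftInverse π σ) : IsJArmendariz B := by
  intro f g hfg i j
  have hσ : mapNonUnitalRingHom σ f * mapNonUnitalRingHom σ g = 0 := by
    rw [← map_mul, hfg, map_zero]
  have h := hA _ _ hσ i j
  rw [coeff_mapNonUnitalRingHom, coeff_mapNonUnitalRingHom, ← map_mul] at h
  simpa only [hπσ _] using Ideal.map_mem_jacobson_bot_of_surjective hπσ.surjective h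

theorem prod_iff : IsJArmendariz (A × B) ↔ IsJArmendariz A ∧ IsJArmendariz B := by
  refine ⟨fun h => ⟨?_, ?_⟩, fun ⟨hA, hB⟩ F G hFG i j => ?_⟩
  · exact h.of_leftInverse ((NonUnitalRingHom.id A).prod 0) (RingHom.fst A B) fun _ => rfl
  · exact h.of_leftInverse ((0 : B →ₙ+* A).prod (NonUnitalRingHom.id B)) (RingHom.snd A B)
      fun _ => rfl
  exact Ideal.mem_jacobson_bot_prod_s7.mpr
    ⟨hA.map_coeff_mul_coeff_mem (RingHom.fst A B) hFG i j,
      hB.map_coeff_mul_coeff_mem (RingHom.snd A B) hFG i j⟩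

end IsJArmendariz

namespace Tri

variable {R M S : Type*} [Ring R] [Ring S] [AddCommGroup M]
  [Module R M] [Module Sᵐᵒᵖ M] [SMulCommClass R Sᵐᵒᵖ M]

def toProd : Tri R M S →+* R × S where
  toFun a := (a.r, a.s)
  map_one' := rfl
  map_mul' _ _ := rfl
  map_zero' := rfl
  map_add' _ _ := rfl

def ofProd : R × S →+* Tri R M S where
  toFun p := ⟨p.1, 0, p.2⟩
  map_one' := rfl
  map_mul' _ _ := by ext <;> simp
  map_zero' := rfl
  map_add' _ _ := by ext <;> simp

/-- The kernel `[[0, M], [0, 0]]` is a square-zero ideal. -/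
theorem ker_toProd_le_jacobson :
    RingHom.ker (toProd : Tri R M S →+* R × S) ≤ Ideal.jacobson ⊥ := by
  intro x hx
  obtain ⟨hr, hs⟩ := Prod.ext_iff.mp hx
  refine Ideal.mem_jacobson_bot_of_isNilpotent_mul fun y => ⟨2, ?_⟩
  ext <;> simp_all [toProd, pow_two]

end Tri

theorem tri_isJArmendariz_iff (R M S : Type*) [Ring R] [Ring S] [AddCommGroup M]
    [Module R M] [Module Sᵐᵒᵖ M] [SMulCommClass R Sᵐᵒᵖ M] :
    IsJArmendariz (Tri R M S) ↔ IsJArmendariz R ∧ IsJArmendariz S := by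
  have hsurj : Function.Surjective (Tri.toProd : Tri R M S →+* R × S) :=
    fun p => ⟨Tri.ofProd p, rfl⟩
  rw [← IsJArmendariz.prod_iff]
  exact ⟨fun h => h.of_leftInverse (Tri.ofProd : R × S →+* Tri R M S) Tri.toProd fun _ => rfl,
    fun h => h.of_surjective_of_ker_le Tri.toProd hsurj Tri.ker_toProd_le_jacobson⟩
end

section
/- For any n ≥ 1, a ring R is J-Armendariz if and only if the n×n upper triangular matrix ring T_n(R) is J-Armendariz. -/
/-!
The diagonal map `T_n(R) → Rⁿ` is a surjective ring hom whose kernel, the strictly upper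
triangular matrices, is a nil ideal and so lies in `J(T_n(R))`. Hence `J(T_n(R))` is the
preimage of `J(Rⁿ) = J(R)ⁿ`, and the J-Armendariz property pulls back along this map from `Rⁿ`,
which inherits it from `R`. Conversely `R` is a retract of `T_n(R)` (scalar matrices, then the
`(0, 0)` entry), and the property passes to retracts because a surjective ring hom maps the
Jacobson radical into the Jacobson radical.
-/

open Polynomial

/-- The subring of `n × n` upper triangular matrices over `R`. -/
def upperTriangular (n : ℕ) (R : Type*) [Ring R] :
    Subring (Matrix (Fin n) (Fin n) R) where
  carrier := {M | ∀ i j : Fin n, j < i → M i j = 0}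
  zero_mem' _ _ _ := rfl
  one_mem' i j hij := Matrix.one_apply_ne (ne_of_gt hij)
  add_mem' {M N} ha hb i j hij := by
    simp only [Matrix.add_apply, ha i j hij, hb i j hij, add_zero]
  neg_mem' {M} h i j hij := by simp only [Matrix.neg_apply, h i j hij, neg_zero]
  mul_mem' {M N} ha hb := by
    intro i j hij
    rw [Matrix.mul_apply]
    apply Finset.sum_eq_zero
    intro k _
    rcases lt_or_ge k i with h | h
    · rw [ha i k h, zero_mul]
    · rw [hb k j (lt_of_lt_of_le hij h), mul_zero]

namespace Matrix

variable {R : Type*} [Semiring R] {n : ℕ}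

theorem pow_apply_eq_zero_of_lt_add {M : Matrix (Fin n) (Fin n) R}
    (hM : ∀ i j : Fin n, j ≤ i → M i j = 0) (k : ℕ) {i j : Fin n} (hij : (j : ℕ) < i + k) :
    (M ^ k) i j = 0 := by
  induction k generalizing j with
  | zero => exact one_apply_ne (by rintro rfl; omega)
  | succ k ih =>
    rw [pow_succ, mul_apply]
    refine Finset.sum_eq_zero fun l _ => ?_
    rcases lt_or_ge (l : ℕ) (i + k) with hl | hl
    · rw [ih hl, zero_mul]
    · rw [hM l j (by rw [Fin.le_def]; omega), mul_zero]

theorem pow_eq_zero_of_apply_eq_zero_of_le {M : Matrix (Fin n) (Fin n) R}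
    (hM : ∀ i j : Fin n, j ≤ i → M i j = 0) : M ^ n = 0 := by
  ext i j
  exact pow_apply_eq_zero_of_lt_add hM n (by omega)

end Matrix

namespace Ideal

variable {S S' : Type*} [Ring S] [Ring S']

theorem mem_jacobson_bot_of_forall_isNilpotent_mul {x : S} (h : ∀ y, IsNilpotent (y * x)) :
    x ∈ jacobson (⊥ : Ideal S) := by
  refine mem_jacobson_iff.mpr fun y => ?_
  obtain ⟨u, hu⟩ := (h y).isUnit_one_add
  refine ⟨(u⁻¹ : Sˣ), mem_bot.mpr ?_⟩
  rw [mul_assoc, ← mul_add_one, add_comm, ← hu, Units.inv_mul, sub_self]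

theorem le_jacobson_bot_of_forall_isNilpotent {I : Ideal S} (h : ∀ x ∈ I, IsNilpotent x) :
    I ≤ jacobson ⊥ := fun _ hx =>
  mem_jacobson_bot_of_forall_isNilpotent_mul fun y => h _ (I.mul_mem_left y hx)

theorem mem_jacobson_bot_pi {ι : Type*} {R : ι → Type*} [∀ i, Ring (R i)] {x : ∀ i, R i}
    (hx : ∀ i, x i ∈ jacobson (⊥ : Ideal (R i))) : x ∈ jacobson (⊥ : Ideal (∀ i, R i)) := by
  refine mem_jacobson_iff.mpr fun y => ?_
  choose z hz using fun i => mem_jacobson_iff.mp (hx i) (y i)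
  exact ⟨z, mem_bot.mpr (funext fun i => mem_bot.mp (hz i))⟩

theorem jacobson_bot_le_comap_of_surjective {f : S →+* S'} (hf : Function.Surjective f) :
    jacobson (⊥ : Ideal S) ≤ comap f (jacobson ⊥) := by
  rw [comap_jacobson_of_surjective hf]
  exact jacobson_mono bot_le

theorem comap_jacobson_bot_of_ker_le {f : S →+* S'} (hf : Function.Surjective f)
    (hker : RingHom.ker f ≤ jacobson ⊥) : comap f (jacobson ⊥) = jacobson (⊥ : Ideal S) := by
  refine le_antisymm ?_ (jacobson_bot_le_comap_of_surjective hf)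
  rw [comap_jacobson_of_surjective hf, ← jacobson_idem (I := ⊥)]
  exact jacobson_mono hker

end Ideal

namespace IsJArmendariz

variable {R S : Type*} [Ring R] [Ring S]

theorem map_coeff_mul_coeff_mem_jacobson (hS : IsJArmendariz S) (f : R →+* S) {p q : R[X]}
    (hpq : p * q = 0) (i j : ℕ) : f (p.coeff i * q.coeff j) ∈ Ideal.jacobson (⊥ : Ideal S) := by
  have hmap : p.map f * q.map f = 0 := by rw [← Polynomial.map_mul, hpq, Polynomial.map_zero]
  simpa only [coeff_map, map_mul] using hS _ _ hmap i j

theorem of_comap_jacobson_le (hS : IsJArmendariz S) (f : R →+* S)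
    (hf : Ideal.comap f (Ideal.jacobson ⊥) ≤ Ideal.jacobson (⊥ : Ideal R)) : IsJArmendariz R :=
  fun _ _ hpq i j => hf (hS.map_coeff_mul_coeff_mem_jacobson f hpq i j)

theorem of_leftInverse_s9 (hS : IsJArmendariz S) (f : R →+* S) (g : S →+* R)
    (hgf : Function.LeftInverse g f) : IsJArmendariz R :=
  hS.of_comap_jacobson_le f fun x hx => hgf x ▸
    Ideal.jacobson_bot_le_comap_of_surjective hgf.surjective hx

theorem pi {ι : Type*} {R : ι → Type*} [∀ i, Ring (R i)] (h : ∀ i, IsJArmendariz (R i)) :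
    IsJArmendariz (∀ i, R i) := fun _ _ hpq k l =>
  Ideal.mem_jacobson_bot_pi fun i =>
    (h i).map_coeff_mul_coeff_mem_jacobson (Pi.evalRingHom R i) hpq k l

end IsJArmendariz

namespace upperTriangular

variable {n : ℕ} {R : Type*} [Ring R]

theorem apply_eq_zero_of_lt (M : upperTriangular n R) {i j : Fin n} (h : j < i) :
    (M : Matrix (Fin n) (Fin n) R) i j = 0 :=
  M.2 i j h

theorem mul_apply_self (M N : upperTriangular n R) (k : Fin n) :
    ((M * N : upperTriangular n R) : Matrix (Fin n) (Fin n) R) k k =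
      (M : Matrix (Fin n) (Fin n) R) k k * (N : Matrix (Fin n) (Fin n) R) k k := by
  refine (Matrix.mul_apply).trans (Finset.sum_eq_single k (fun l _ hl => ?_) (by simp))
  rcases lt_or_gt_of_ne hl with h | h
  · rw [apply_eq_zero_of_lt M h, zero_mul]
  · rw [apply_eq_zero_of_lt N h, mul_zero]

variable (n R) in
def diagHom : upperTriangular n R →+* (Fin n → R) where
  toFun M := Matrix.diag M
  map_one' := funext fun k => Matrix.one_apply_eq k
  map_zero' := rfl
  map_add' _ _ := rfl
  map_mul' M N := funext (mul_apply_self M N)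

theorem diagHom_surjective : Function.Surjective (diagHom n R) := fun d =>
  ⟨⟨Matrix.diagonal d, fun _ _ h => Matrix.diagonal_apply_ne d (ne_of_gt h)⟩,
    Matrix.diag_diagonal d⟩

theorem isNilpotent_of_diagHom_eq_zero {M : upperTriangular n R} (hM : diagHom n R M = 0) :
    IsNilpotent M := by
  refine ⟨n, Subtype.ext ?_⟩
  rw [SubmonoidClass.coe_pow]
  refine Matrix.pow_eq_zero_of_apply_eq_zero_of_le fun i j hji => ?_
  rcases hji.lt_or_eq with h | rfl
  · exact apply_eq_zero_of_lt M h
  · exact congrFun hM j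

theorem ker_diagHom_le_jacobson :
    RingHom.ker (diagHom n R) ≤ Ideal.jacobson (⊥ : Ideal (upperTriangular n R)) :=
  Ideal.le_jacobson_bot_of_forall_isNilpotent fun _ hM => isNilpotent_of_diagHom_eq_zero hM

theorem comap_diagHom_jacobson :
    Ideal.comap (diagHom n R) (Ideal.jacobson ⊥) =
      Ideal.jacobson (⊥ : Ideal (upperTriangular n R)) :=
  Ideal.comap_jacobson_bot_of_ker_le diagHom_surjective ker_diagHom_le_jacobson

variable (n R) in
def scalarHom : R →+* upperTriangular n R :=
  (Matrix.scalar (Fin n)).codRestrict _ fun _ _ _ h => Matrix.diagonal_apply_ne _ (ne_of_gt h)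

theorem diagHom_scalarHom (r : R) : diagHom n R (scalarHom n R r) = fun _ => r :=
  Matrix.diag_diagonal _

end upperTriangular

theorem isJArmendariz_iff_upperTriangular (R : Type*) [Ring R] (n : ℕ) (hn : 1 ≤ n) :
    IsJArmendariz R ↔ IsJArmendariz (upperTriangular n R) := by
  constructor
  · intro hR
    exact (IsJArmendariz.pi fun _ => hR).of_comap_jacobson_le (upperTriangular.diagHom n R)
      upperTriangular.comap_diagHom_jacobson.le
  · intro hT
    exact hT.of_leftInverse_s9 (upperTriangular.scalarHom n R)
      ((Pi.evalRingHom _ ⟨0, hn⟩).comp (upperTriangular.diagHom n R))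
      fun r => congrFun (upperTriangular.diagHom_scalarHom r) _
end

section
/- If R is a J-Armendariz ring and e is an idempotent of R, then the corner ring eRe is J-Armendariz. -/
/-!
The inclusion `eRe → R` is a non-unital ring homomorphism, so applying it coefficientwise is
multiplicative on polynomials and turns `f * g = 0` over `eRe` into the same equation over `R`;
hence every `a_i * b_j` lies in `J(R)`. It remains to see `J(R) ∩ eRe ⊆ J(eRe)`: if
`s * (y * z + 1) = 1` in `R`, then `s` fixes `1 - e` (as `y * z * (1 - e) = 0`), and so
`e * s * e` is a left inverse of `y * z + e` in `eRe`.
-/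

open Polynomial

/-- The corner `eRe` of a ring `R` at an element `e`, realized as the set of
elements absorbed by `e` on both sides. For an idempotent `e` this is a ring
with identity `e`. -/
def Corner {R : Type*} [Ring R] (e : R) : Type _ :=
  {x : R // e * x = x ∧ x * e = x}

namespace Corner

variable {R : Type*} [Ring R] {e : R}

instance : Add (Corner e) :=
  ⟨fun x y => ⟨x.1 + y.1, by rw [mul_add, x.2.1, y.2.1], by rw [add_mul, x.2.2, y.2.2]⟩⟩

instance : Zero (Corner e) := ⟨⟨0, by simp, by simp⟩⟩

instance : Neg (Corner e) :=
  ⟨fun x => ⟨-x.1, by rw [mul_neg, x.2.1], by rw [neg_mul, x.2.2]⟩⟩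

instance : Mul (Corner e) :=
  ⟨fun x y => ⟨x.1 * y.1, by rw [← mul_assoc, x.2.1], by rw [mul_assoc, y.2.2]⟩⟩

instance [he : Fact (IsIdempotentElem e)] : One (Corner e) := ⟨⟨e, he.out, he.out⟩⟩

instance [Fact (IsIdempotentElem e)] : Ring (Corner e) where
  add_assoc a b c := Subtype.ext (add_assoc a.1 b.1 c.1)
  zero_add a := Subtype.ext (zero_add a.1)
  add_zero a := Subtype.ext (add_zero a.1)
  add_comm a b := Subtype.ext (add_comm a.1 b.1)
  neg_add_cancel a := Subtype.ext (neg_add_cancel a.1)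
  mul_assoc a b c := Subtype.ext (mul_assoc a.1 b.1 c.1)
  one_mul a := Subtype.ext a.2.1
  mul_one a := Subtype.ext a.2.2
  left_distrib a b c := Subtype.ext (left_distrib a.1 b.1 c.1)
  right_distrib a b c := Subtype.ext (right_distrib a.1 b.1 c.1)
  zero_mul a := Subtype.ext (zero_mul a.1)
  mul_zero a := Subtype.ext (mul_zero a.1)
  nsmul := nsmulRec
  zsmul := zsmulRec

end Corner

namespace Polynomial

variable {A B : Type*} [Semiring A] [Semiring B]

noncomputable def mapNonUnital (φ : A →ₙ+* B) (p : A[X]) : B[X] :=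
  p.sum fun n a => monomial n (φ a)

@[simp]
theorem coeff_mapNonUnital (φ : A →ₙ+* B) (p : A[X]) (n : ℕ) :
    (p.mapNonUnital φ).coeff n = φ (p.coeff n) := by
  rw [mapNonUnital, sum_def, finsetSum_coeff]
  simp only [coeff_monomial]
  rw [Finset.sum_ite_eq']
  split_ifs with h
  · rfl
  · rw [notMem_support_iff.mp h, map_zero]

theorem mapNonUnital_mul (φ : A →ₙ+* B) (p q : A[X]) :
    (p * q).mapNonUnital φ = p.mapNonUnital φ * q.mapNonUnital φ := by
  ext n
  simp [coeff_mul, map_sum]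

end Polynomial

theorem IsJArmendariz.of_nonUnitalRingHom {A B : Type*} [Ring A] [Ring B] (hB : IsJArmendariz B)
    (φ : A →ₙ+* B) (hφ : ∀ a, φ a ∈ Ideal.jacobson (⊥ : Ideal B) → a ∈ Ideal.jacobson ⊥) :
    IsJArmendariz A := by
  intro f g hfg i j
  have hmap : f.mapNonUnital φ * g.mapNonUnital φ = 0 := by
    rw [← Polynomial.mapNonUnital_mul, hfg]
    ext n
    simp
  apply hφ
  simpa using hB _ _ hmap i j

theorem IsIdempotentElem.mul_mul_mul_add_eq_self {R : Type*} [Ring R] {e a s : R}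
    (he : IsIdempotentElem e) (hea : e * a = a) (hae : a * e = a) (hs : s * (a + 1) = 1) :
    e * s * e * (a + e) = e := by
  have h_compl : (a + 1) * (1 - e) = 1 - e := by
    rw [add_mul, one_mul, mul_sub, hae, mul_one, sub_self, zero_add]
  have hs_compl : s * (1 - e) = 1 - e := by
    rw [← h_compl, ← mul_assoc, hs, one_mul, h_compl]
  calc e * s * e * (a + e) = e * s * (a + 1) - e * s * (1 - e) := by
        rw [mul_assoc _ e, mul_add, hea, he.eq]; noncomm_ring
    _ = e := by rw [mul_assoc, hs, mul_assoc, hs_compl, mul_sub, he.eq, mul_one, sub_self, sub_zero]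

namespace Corner

variable {R : Type*} [Ring R] {e : R} [Fact (IsIdempotentElem e)]

def subtype : Corner e →ₙ+* R where
  toFun := Subtype.val
  map_zero' := rfl
  map_add' _ _ := rfl
  map_mul' _ _ := rfl

theorem mem_jacobson_of_val_mem {z : Corner e} (hz : z.1 ∈ Ideal.jacobson (⊥ : Ideal R)) :
    z ∈ Ideal.jacobson (⊥ : Ideal (Corner e)) := by
  have he : IsIdempotentElem e := Fact.out
  rw [Ideal.mem_jacobson_iff]
  intro y
  obtain ⟨s, hs⟩ := Ideal.mem_jacobson_iff.mp hz y.1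
  rw [Ideal.mem_bot, sub_eq_zero, mul_assoc, ← mul_add_one] at hs
  refine ⟨⟨e * s * e, by rw [← mul_assoc, ← mul_assoc, he.eq], by rw [mul_assoc, he.eq]⟩, ?_⟩
  rw [Ideal.mem_bot, sub_eq_zero]
  apply Subtype.ext
  have hea : e * (y.1 * z.1) = y.1 * z.1 := by rw [← mul_assoc, y.2.1]
  have hae : y.1 * z.1 * e = y.1 * z.1 := by rw [mul_assoc, z.2.2]
  calc e * s * e * y.1 * z.1 + e * s * e = e * s * e * (y.1 * z.1 + e) := by
        rw [mul_add, ← mul_assoc (e * s * e), mul_assoc (e * s) e e, he.eq]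
    _ = e := he.mul_mul_mul_add_eq_self hea hae hs

end Corner

theorem corner_isJArmendariz {R : Type*} [Ring R] (e : R)
    [Fact (IsIdempotentElem e)] (h : IsJArmendariz R) :
    IsJArmendariz (Corner e) :=
  h.of_nonUnitalRingHom Corner.subtype fun _ => Corner.mem_jacobson_of_val_mem
end

section
/- Let R be an abelian ring (every idempotent is central) and e an idempotent of R. If eRe is J-Armendariz and (1−e)R(1−e) is J-Armendariz, then R is J-Armendariz. -/
open Polynomial

/-- The projection `R →+* Corner e` for a central idempotent `e`. -/
def cornerHom {R : Type*} [Ring R] (e : R) [hid : Fact (IsIdempotentElem e)]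
    (hc : ∀ a : R, e * a = a * e) : R →+* Corner e where
  toFun r := ⟨e * r * e, by
      have hee : e * e = e := hid.out
      simp only [← mul_assoc, hee], by
      have hee : e * e = e := hid.out
      simp only [mul_assoc, hee]⟩
  map_one' := Subtype.ext (by show e * 1 * e = e; rw [mul_one]; exact hid.out)
  map_mul' r s := Subtype.ext (by
    show e * (r * s) * e = (e * r * e) * (e * s * e)
    have hsand : ∀ t : R, e * t * e = e * t := fun t => by
      rw [mul_assoc, ← hc t, ← mul_assoc, hid.out]
    rw [hsand r, hsand s, hsand (r * s)]
    symm
    calc e * r * (e * s) = e * (r * e) * s := by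
          rw [mul_assoc e r (e * s), ← mul_assoc r e s, ← mul_assoc]
      _ = e * (e * r) * s := by rw [← hc r]
      _ = e * (r * s) := by rw [← mul_assoc e e r, hid.out, mul_assoc])
  map_zero' := Subtype.ext (by show e * 0 * e = 0; simp)
  map_add' r s := Subtype.ext (by
    show e * (r + s) * e = e * r * e + e * s * e
    rw [mul_add, add_mul])

theorem mem_jacobson_of_corner {R : Type*} [Ring R] (e : R) [hid : Fact (IsIdempotentElem e)]
    (hc : ∀ a : R, e * a = a * e) (x : Corner e)
    (hx : x ∈ Ideal.jacobson (⊥ : Ideal (Corner e))) :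
    x.1 ∈ Ideal.jacobson (⊥ : Ideal R) := by
  rw [Ideal.mem_jacobson_iff] at hx ⊢
  intro y
  obtain ⟨z, hz⟩ := hx (cornerHom e hc y)
  rw [Ideal.mem_bot] at hz
  have hz1 : z.1 * (e * y * e) * x.1 + z.1 + -e = 0 := congrArg Subtype.val hz
  refine ⟨z.1 + (1 - e), ?_⟩
  rw [Ideal.mem_bot]
  have hex : e * x.1 = x.1 := x.2.1
  have h1 : z.1 * (e * y * e) * x.1 = z.1 * y * x.1 := by
    calc z.1 * (e * y * e) * x.1 = z.1 * (e * y) * (e * x.1) := by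
          rw [← mul_assoc z.1 (e * y) e, mul_assoc (z.1 * (e * y)) e x.1]
      _ = z.1 * (e * y) * x.1 := by rw [hex]
      _ = z.1 * e * y * x.1 := by rw [← mul_assoc z.1 e y]
      _ = z.1 * y * x.1 := by rw [z.2.2]
  have h2 : (1 - e) * y * x.1 = 0 := by
    have he3 : e * y * x.1 = y * x.1 := by rw [hc y, mul_assoc, hex]
    rw [sub_mul, one_mul, sub_mul, he3, sub_self]
  calc (z.1 + (1 - e)) * y * x.1 + (z.1 + (1 - e)) - 1
      = (z.1 * y * x.1 + z.1 + -e) + ((1 - e) * y * x.1) := by noncomm_ring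
    _ = 0 := by rw [← h1, hz1, h2, add_zero]

theorem isJArmendariz_of_corners {R : Type*} [Ring R] (e : R)
    [Fact (IsIdempotentElem e)] [Fact (IsIdempotentElem (1 - e))]
    (habelian : ∀ a : R, IsIdempotentElem a → a ∈ Set.center R)
    (he : IsJArmendariz (Corner e))
    (he' : IsJArmendariz (Corner (1 - e))) :
    IsJArmendariz R := by
  have hce : ∀ a : R, e * a = a * e := fun a =>
    (Set.mem_center_iff.mp (habelian e Fact.out)).comm a
  have hce' : ∀ a : R, (1 - e) * a = a * (1 - e) := fun a =>
    (Set.mem_center_iff.mp (habelian (1 - e) Fact.out)).comm a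
  intro f g hfg i j
  set a := f.coeff i
  set b := g.coeff j
  have key : ∀ (u : R) (_ : Fact (IsIdempotentElem u)) (_ : ∀ a : R, u * a = a * u)
      (_ : IsJArmendariz (Corner u)), u * (a * b) ∈ Ideal.jacobson (⊥ : Ideal R) := by
    intro u hu hcu hJ
    have h0 : f.map (cornerHom u hcu) * g.map (cornerHom u hcu) = 0 := by
      rw [← Polynomial.map_mul, hfg, Polynomial.map_zero]
    have := hJ _ _ h0 i j
    rw [Polynomial.coeff_map, Polynomial.coeff_map] at this
    rw [← map_mul] at this
    have h1 := mem_jacobson_of_corner u hcu _ this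
    have h2 : ((cornerHom u hcu) (a * b)).1 = u * (a * b) := by
      show u * (a * b) * u = u * (a * b)
      rw [mul_assoc u (a * b) u, ← hcu (a * b), ← mul_assoc, hu.out]
    rwa [h2] at h1
  have hpart1 := key e ‹_› hce he
  have hpart2 := key (1 - e) ‹_› hce' he'
  have := Ideal.add_mem _ hpart1 hpart2
  have heq : e * (a * b) + (1 - e) * (a * b) = a * b := by noncomm_ring
  rwa [heq] at this
end

section
/- If the polynomial ring R[x] is J-Armendariz, then R is J-Armendariz. -/
open Polynomial

theorem Ideal.map_mem_jacobson_bot_of_surjective_s14 {R S : Type*} [Ring R] [Ring S]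
    {f : R →+* S} (hf : Function.Surjective f) {x : R}
    (hx : x ∈ Ideal.jacobson (⊥ : Ideal R)) : f x ∈ Ideal.jacobson (⊥ : Ideal S) := by
  have : RingHomSurjective f := ⟨hf⟩
  rw [Ideal.jacobson_bot] at hx ⊢
  exact Ring.le_comap_jacobson f hx

theorem Polynomial.mem_jacobson_bot_of_C_mem {R : Type*} [Ring R] {a : R}
    (ha : C a ∈ Ideal.jacobson (⊥ : Ideal R[X])) : a ∈ Ideal.jacobson (⊥ : Ideal R) := by
  simpa using Ideal.map_mem_jacobson_bot_of_surjective_s14 constantCoeff_surjective ha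

theorem isJArmendariz_of_polynomial (R : Type*) [Ring R]
    (h : IsJArmendariz R[X]) : IsJArmendariz R := by
  intro f g hfg i j
  have hCfg : f.map C * g.map C = 0 := by
    rw [← Polynomial.map_mul, hfg, Polynomial.map_zero]
  have hC := h _ _ hCfg i j
  rw [coeff_map, coeff_map, ← map_mul] at hC
  exact mem_jacobson_bot_of_C_mem hC
end

section
/- Suppose R is a J-Armendariz ring and J(R)[x] ⊆ J(R[x]). Then the polynomial ring R[x] is J-Armendariz. -/
/-!
Substituting `y = X ^ t` into `F, G ∈ R[X][y]`, with `t` exceeding the degrees of all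
coefficients, is a ring homomorphism `R[X][y] → R[X]` that places the coefficient of `X ^ k y ^ i`
at `X ^ (t * i + k)` without overlaps. Hence `F * G = 0` yields a product vanishing in `R[X]`
whose coefficients are exactly those of `F` and `G`, so J-Armendariz for `R` puts every product
of coefficients of coefficients in `J(R)`. The coefficients of `F.coeff i * G.coeff j` are sums of
such products, so the hypothesis `J(R)[X] ⊆ J(R[X])` finishes the proof.
-/

open Polynomial

namespace Polynomial

variable {R : Type*} [Ring R]

lemma natDegree_coeff_le_sup (F : R[X][X]) (e : ℕ) :
    (F.coeff e).natDegree ≤ F.support.sup fun e => (F.coeff e).natDegree := by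
  by_cases he : e ∈ F.support
  · exact Finset.le_sup (f := fun e => (F.coeff e).natDegree) he
  · rw [notMem_support_iff.mp he, natDegree_zero]
    exact Nat.zero_le _

lemma coeff_eval₂_X_pow_mul_add {F : R[X][X]} {t : ℕ} (ht : ∀ e, (F.coeff e).natDegree < t)
    (i : ℕ) {k : ℕ} (hk : k < t) :
    (F.eval₂ (RingHom.id R[X]) (X ^ t)).coeff (t * i + k) = (F.coeff i).coeff k := by
  have hterm : ∀ e, (F.coeff e * (X ^ t) ^ e).coeff (t * i + k) =
      if t * e ≤ t * i + k then (F.coeff e).coeff (t * i + k - t * e) else 0 := fun e => by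
    rw [← pow_mul, coeff_mul_X_pow']
  rw [eval₂_eq_sum, Polynomial.sum_def, finsetSum_coeff]
  simp only [RingHom.id_apply, hterm]
  rw [Finset.sum_eq_single i]
  · rw [if_pos (Nat.le_add_right _ _), Nat.add_sub_cancel_left]
  · intro e _ hne
    rcases lt_or_gt_of_ne hne with h | h
    · have : t * e + t ≤ t * i := by nlinarith
      rw [if_pos (by omega)]
      exact coeff_eq_zero_of_natDegree_lt (by have := ht e; omega)
    · have : t * i + t ≤ t * e := by nlinarith
      rw [if_neg (by omega)]
  · intro hi
    rw [notMem_support_iff.mp hi, if_pos (Nat.le_add_right _ _), coeff_zero]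

end Polynomial

theorem IsJArmendariz.coeff_coeff_mul_mem {R : Type*} [Ring R] (hR : IsJArmendariz R)
    {F G : R[X][X]} (hFG : F * G = 0) (i j k l : ℕ) :
    (F.coeff i).coeff k * (G.coeff j).coeff l ∈ Ideal.jacobson (⊥ : Ideal R) := by
  set t := (F.support.sup fun e => (F.coeff e).natDegree) +
    (G.support.sup fun e => (G.coeff e).natDegree) + k + l + 1
  have htF : ∀ e, (F.coeff e).natDegree < t := fun e => by
    have := natDegree_coeff_le_sup F e; omega
  have htG : ∀ e, (G.coeff e).natDegree < t := fun e => by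
    have := natDegree_coeff_le_sup G e; omega
  have hsubst : F.eval₂ (RingHom.id R[X]) (X ^ t) * G.eval₂ (RingHom.id R[X]) (X ^ t) = 0 := by
    rw [← eval₂_mul_noncomm (hf := fun _ => (commute_X _).symm.pow_right t), hFG, eval₂_zero]
  have hmem := hR _ _ hsubst (t * i + k) (t * j + l)
  rwa [coeff_eval₂_X_pow_mul_add htF i (by omega), coeff_eval₂_X_pow_mul_add htG j (by omega)]
    at hmem

theorem polynomial_isJArmendariz (R : Type*) [Ring R]
    (hR : IsJArmendariz R)
    (hJ : ∀ f : R[X], (∀ i : ℕ, f.coeff i ∈ Ideal.jacobson (⊥ : Ideal R)) →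
      f ∈ Ideal.jacobson (⊥ : Ideal R[X])) :
    IsJArmendariz R[X] := by
  intro F G hFG i j
  apply hJ
  intro n
  rw [coeff_mul]
  exact Ideal.sum_mem _ fun p _ => hR.coeff_coeff_mul_mem hFG i j p.1 p.2
end

section
/- For a commutative ring R, if R[x] is J-Armendariz, then the Laurent polynomial ring R[x, x⁻¹] is J-Armendariz. -/
open Polynomial

/-!
Over a commutative ring the Jacobson radical of `R[x]` is its nilradical, since `1 + p x` is a
unit only when `p` is nilpotent. Given `f g = 0` over `R[x, x⁻¹]`, multiplying `f` and `g` by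
powers `x^m`, `x^n` clears denominators and yields `F G = 0` with `F`, `G` in `R[x][y]`. The coefficient
products of `F` and `G` are then nilpotent, and they differ from those of `f` and `g` by the
unit `x^(m+n)`, so the latter are nilpotent as well, hence in the Jacobson radical.
-/

theorem Polynomial.jacobson_bot_eq_nilradical (S : Type*) [CommRing S] :
    Ideal.jacobson (⊥ : Ideal S[X]) = nilradical S[X] := by
  refine le_antisymm (fun p hp ↦ mem_nilradical.mpr ?_) Ideal.radical_le_jacobson
  have hunit : IsUnit (C 1 + X * p) := by
    simpa [mul_comm, add_comm] using Ideal.mem_jacobson_bot.mp hp X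
  exact (isUnit_C_add_X_mul_iff.mp hunit).2

namespace LaurentPolynomial

theorem exists_map_toLaurent_eq_mul_C_T {R : Type*} [CommSemiring R] (f : R[T;T⁻¹][X]) :
    ∃ (n : ℕ) (F : R[X][X]), F.map toLaurent = f * Polynomial.C (T n) := by
  induction f using Polynomial.induction_on' with
  | add f g hf hg =>
    obtain ⟨m, F, hF⟩ := hf
    obtain ⟨n, G, hG⟩ := hg
    refine ⟨m + n, F * Polynomial.C (X ^ n) + G * Polynomial.C (X ^ m), ?_⟩
    simp only [Polynomial.map_add, Polynomial.map_mul, map_C, hF, hG,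
      Polynomial.toLaurent_X_pow, Nat.cast_add, T_add, Polynomial.C_mul]
    ring
  | monomial k a =>
    obtain ⟨n, a', ha'⟩ := exists_T_pow a
    exact ⟨n, monomial k a', by rw [map_monomial, ha', monomial_mul_C]⟩

end LaurentPolynomial

open LaurentPolynomial in
theorem laurent_isJArmendariz (R : Type*) [CommRing R]
    (h : IsJArmendariz R[X]) : IsJArmendariz (LaurentPolynomial R) := by
  intro f g hfg i j
  obtain ⟨m, F, hF⟩ := exists_map_toLaurent_eq_mul_C_T f
  obtain ⟨n, G, hG⟩ := exists_map_toLaurent_eq_mul_C_T g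
  have hFG : F * G = 0 := map_injective _ toLaurent_injective <| by
    rw [Polynomial.map_mul, hF, hG, mul_mul_mul_comm, hfg, zero_mul, Polynomial.map_zero]
  have hnil : IsNilpotent (F.coeff i * G.coeff j) := by
    simpa [jacobson_bot_eq_nilradical, mem_nilradical] using h F G hFG i j
  have hcoeff : toLaurent (F.coeff i * G.coeff j) = f.coeff i * g.coeff j * T (m + n) := by
    rw [map_mul, ← coeff_map, ← coeff_map, hF, hG, coeff_mul_C, coeff_mul_C, T_add]
    ring
  refine Ideal.radical_le_jacobson (mem_nilradical.mpr ?_)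
  rw [← (isUnit_T _).isNilpotent_mul_unit_of_commute_iff (Commute.all _ _), ← hcoeff]
  exact hnil.map _
end

section
/- Let F be a field, R = M₂(F), and S = { Σ_{i≥0} a_i t^i ∈ R[[t]] : a₀ is a scalar multiple of the identity matrix }. Then S is a local ring (hence J-Armendariz) but S is not weak Armendariz: for f(x) = e₁₁t − e₁₂t·x and g(x) = e₂₁t + e₁₁t·x in S[x], f(x)g(x) = 0 but (e₁₁t)² = e₁₁t² is not nilpotent in S. -/
open Polynomial

/-- A ring is weak Armendariz if `f * g = 0` in `R[X]` implies all coefficient products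
are nilpotent. -/
def IsWeakArmendariz (R : Type*) [Ring R] : Prop :=
  ∀ f g : R[X], f * g = 0 → ∀ i j : ℕ, IsNilpotent (f.coeff i * g.coeff j)

/-- The subring of the power series ring over `M₂(F)` consisting of series whose
constant term is a scalar matrix. -/
noncomputable def scalarConstSubring (F : Type*) [Field F] :
    Subring (PowerSeries (Matrix (Fin 2) (Fin 2) F)) :=
  Subring.comap (PowerSeries.constantCoeff (R := Matrix (Fin 2) (Fin 2) F))
    (algebraMap F (Matrix (Fin 2) (Fin 2) F)).range
/-
Taking the scalar of the constant term is a ring homomorphism `S → F`, and it reflects units: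
a series whose constant term is an invertible scalar is invertible, and its inverse again has a
scalar constant term. Hence `S` is local, and the kernel of this map lies in `J(S)`; since `F[x]`
is a domain, `f g = 0` in `S[x]` puts all coefficients of `f` or all coefficients of `g` in the
kernel. For the failure of weak Armendariz, `a = e₁₁t`, `b = e₁₂t`, `c = e₂₁t` satisfy
`ac = ba = 0` and `bc = a²`, so `(a - bx)(c + ax) = 0`, while `a² = e₁₁t²` has the nonzero powers
`e₁₁t^{2k}`.
-/

namespace RingHom

variable {R D : Type*} [Ring R] [Semiring D]

theorem ker_le_jacobson_of_isLocalHom (φ : R →+* D) [IsLocalHom φ] :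
    ker φ ≤ Ideal.jacobson ⊥ := by
  intro x hx
  refine Ideal.mem_jacobson_iff.2 fun y => ?_
  obtain ⟨u, hu⟩ := isUnit_of_map_unit φ (y * x + 1) (by simp [(mem_ker).1 hx])
  refine ⟨↑u⁻¹, ?_⟩
  rw [Submodule.mem_bot, mul_assoc, ← mul_add_one, ← hu, Units.inv_mul, sub_self]

theorem isJArmendariz_of_isLocalHom [NoZeroDivisors D] (φ : R →+* D) [IsLocalHom φ] :
    IsJArmendariz R := by
  intro f g hfg i j
  apply φ.ker_le_jacobson_of_isLocalHom
  have hmap : f.map φ = 0 ∨ g.map φ = 0 :=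
    mul_eq_zero.1 (by rw [← Polynomial.map_mul, hfg, Polynomial.map_zero])
  rw [mem_ker, map_mul, ← coeff_map, ← coeff_map]
  rcases hmap with h | h <;> simp [h]

end RingHom

theorem Polynomial.C_sub_C_mul_X_mul_C_add_C_mul_X {R : Type*} [Ring R] (a b c d : R) :
    (C a - C b * X) * (C c + C d * X) =
      C (a * c) + C (a * d - b * c) * X - C (b * d) * X ^ 2 := by
  have hX : X * (C d * X) = C d * X * X := by rw [← mul_assoc, X_mul_C]
  simp only [sub_mul, mul_add, C_mul, C_sub, pow_two, mul_assoc, X_mul_C, hX]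
  noncomm_ring

theorem not_isWeakArmendariz_of {R : Type*} [Ring R] {a b c : R} (hac : a * c = 0)
    (hbc : b * c = a * a) (hba : b * a = 0) (ha : ¬ IsNilpotent (a * a)) :
    ¬ IsWeakArmendariz R := by
  intro h
  have hfg : (C a - C b * X) * (C c + C a * X) = 0 := by
    rw [C_sub_C_mul_X_mul_C_add_C_mul_X, hac, hbc, hba]; simp
  exact ha (by simpa [coeff_C] using h _ _ hfg 0 1)

theorem PowerSeries.monomial_pow' {R : Type*} [Semiring R] (n : ℕ) (a : R) (k : ℕ) :
    monomial n a ^ k = monomial (k * n) (a ^ k) := by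
  induction k with
  | zero => simp
  | succ k ih => rw [pow_succ, ih, monomial_mul_monomial, pow_succ, Nat.succ_mul]

theorem PowerSeries.not_isNilpotent_monomial {R : Type*} [Semiring R] {a : R}
    (ha : ¬ IsNilpotent a) (n : ℕ) : ¬ IsNilpotent (PowerSeries.monomial n a) := by
  rintro ⟨k, hk⟩
  rw [monomial_pow'] at hk
  exact ha ⟨k, by simpa using congrArg (coeff (k * n)) hk⟩

namespace scalarConstSubring

variable (F : Type*) [Field F]

local notation "M₂" => Matrix (Fin 2) (Fin 2) F

noncomputable def scalarEquiv : F ≃+* (algebraMap F M₂).range :=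
  RingEquiv.ofBijective (algebraMap F M₂).rangeRestrict
    ⟨(algebraMap F M₂).injective.codRestrict _, (algebraMap F M₂).rangeRestrict_surjective⟩

noncomputable def constantCoeff : scalarConstSubring F →+* F :=
  (scalarEquiv F).symm.toRingHom.comp (PowerSeries.constantCoeff.restrict _ _ fun _ hs => hs)

variable {F}

theorem algebraMap_constantCoeff (s : scalarConstSubring F) :
    algebraMap F M₂ (constantCoeff F s) = PowerSeries.constantCoeff (s : PowerSeries M₂) :=
  congrArg Subtype.val ((scalarEquiv F).apply_symm_apply _)

instance : IsLocalHom (constantCoeff F) := by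
  refine ⟨fun s hs => ?_⟩
  let u : M₂ˣ := Units.map (algebraMap F M₂).toMonoidHom hs.unit
  have hu : PowerSeries.constantCoeff (s : PowerSeries M₂) = u :=
    (algebraMap_constantCoeff s).symm
  have hinv : PowerSeries.invOfUnit (s : PowerSeries M₂) u ∈ scalarConstSubring F := by
    show PowerSeries.constantCoeff _ ∈ (algebraMap F M₂).range
    rw [PowerSeries.constantCoeff_invOfUnit, Units.coe_map_inv]
    exact ⟨_, rfl⟩
  exact ⟨⟨s, ⟨_, hinv⟩, Subtype.ext (PowerSeries.mul_invOfUnit _ u hu),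
    Subtype.ext (PowerSeries.invOfUnit_mul _ u hu)⟩, rfl⟩

theorem monomial_mem {n : ℕ} (hn : n ≠ 0) (A : M₂) :
    PowerSeries.monomial n A ∈ scalarConstSubring F :=
  ⟨0, by
    simp [← PowerSeries.coeff_zero_eq_constantCoeff_apply, PowerSeries.coeff_monomial, hn.symm]⟩

/-- `tSingle i j` is `e_ij t`. -/
noncomputable def tSingle (i j : Fin 2) : scalarConstSubring F :=
  ⟨PowerSeries.monomial 1 (Matrix.single i j 1), monomial_mem one_ne_zero _⟩

theorem coe_tSingle_mul_tSingle (i j k l : Fin 2) :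
    ((tSingle i j * tSingle k l : scalarConstSubring F) : PowerSeries M₂) =
      PowerSeries.monomial 2 (Matrix.single i j 1 * Matrix.single k l 1) :=
  PowerSeries.monomial_mul_monomial _ _ _ _

theorem tSingle_mul_tSingle_of_ne {j k : Fin 2} (h : j ≠ k) (i l : Fin 2) :
    (tSingle i j * tSingle k l : scalarConstSubring F) = 0 :=
  Subtype.ext <| by
    rw [coe_tSingle_mul_tSingle, Matrix.single_mul_single_of_ne (h := h), map_zero]; rfl

theorem coe_tSingle_mul_tSingle_same (i j k : Fin 2) :
    ((tSingle i j * tSingle j k : scalarConstSubring F) : PowerSeries M₂) =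
      PowerSeries.monomial 2 (Matrix.single i k 1) := by
  rw [coe_tSingle_mul_tSingle, Matrix.single_mul_single_same, one_mul]

theorem not_isNilpotent_tSingle_mul_self (i : Fin 2) :
    ¬ IsNilpotent (tSingle i i * tSingle i i : scalarConstSubring F) := fun h => by
  have hcoe := h.map (scalarConstSubring F).subtype
  rw [Subring.subtype_apply, coe_tSingle_mul_tSingle_same] at hcoe
  refine PowerSeries.not_isNilpotent_monomial (fun he => ?_) 2 hcoe
  have hidem : IsIdempotentElem (Matrix.single i i (1 : F)) := by
    rw [IsIdempotentElem, Matrix.single_mul_single_same, one_mul]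
  simpa using congrFun₂ (hidem.eq_zero_of_isNilpotent he) i i

end scalarConstSubring

theorem scalarConstSubring_local_jArmendariz_not_weakArmendariz
    (F : Type*) [Field F] :
    IsLocalRing (scalarConstSubring F) ∧ IsJArmendariz (scalarConstSubring F) ∧
      ¬ IsWeakArmendariz (scalarConstSubring F) := by
  let φ := scalarConstSubring.constantCoeff F
  refine ⟨φ.domain_isLocalRing, φ.isJArmendariz_of_isLocalHom, ?_⟩
  let e : Fin 2 → Fin 2 → scalarConstSubring F := scalarConstSubring.tSingle
  have hbc : e 0 1 * e 1 0 = e 0 0 * e 0 0 :=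
    Subtype.ext <| (scalarConstSubring.coe_tSingle_mul_tSingle_same 0 1 0).trans
      (scalarConstSubring.coe_tSingle_mul_tSingle_same 0 0 0).symm
  exact not_isWeakArmendariz_of (scalarConstSubring.tSingle_mul_tSingle_of_ne (by decide) 0 0) hbc
    (scalarConstSubring.tSingle_mul_tSingle_of_ne (by decide) 0 0)
    (scalarConstSubring.not_isNilpotent_tSingle_mul_self 0)
end
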